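/- Along the Projective Euler pullback, the bilinear momenta are the conjugate momenta of the cyclic angles: if the momenta (P, Φ, Θ, Ψ) are defined by requiring Σpᵢ dqᵢ = P dρ + Φ dφ + Θ dθ + Ψ dψ, then Φ = (1/2)(p₁q₄ - p₄q₁ - p₂q₃ + p₃q₂) and Ψ = (1/2)(p₁q₄ - p₄q₁ + p₂q₃ - p₃q₂), i.e. Φ = Ξ₁/2 and Ψ = Ξ₀/2 where Ξ₁ and Ξ₀ are the bilinear and twin-bilinear functions. -/
import Mathlib

/-- Projective Euler coordinate functions on T*ℍ₀. -/
noncomputable def q1f (ρ φ θ ψ : ℝ) : ℝ :=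
  Real.sqrt ρ * Real.cos (θ / 2) * Real.sin ((φ + ψ) / 2)
noncomputable def q2f (ρ φ θ ψ : ℝ) : ℝ :=
  Real.sqrt ρ * Real.sin (θ / 2) * Real.cos ((φ - ψ) / 2)
noncomputable def q3f (ρ φ θ ψ : ℝ) : ℝ :=
  Real.sqrt ρ * Real.sin (θ / 2) * Real.sin ((φ - ψ) / 2)
noncomputable def q4f (ρ φ θ ψ : ℝ) : ℝ :=
  Real.sqrt ρ * Real.cos (θ / 2) * Real.cos ((φ + ψ) / 2)

private lemma aux_lin (a b x : ℝ) :
    HasDerivAt (fun t : ℝ => (a * t + b) / 2) (a / 2) x := by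
  simpa using (((hasDerivAt_id x).const_mul a).add_const b).div_const 2

private lemma aux_sin (c a b x : ℝ) :
    HasDerivAt (fun t : ℝ => c * Real.sin ((a * t + b) / 2))
      (c * (Real.cos ((a * x + b) / 2) * (a / 2))) x :=
  ((Real.hasDerivAt_sin _).comp x (aux_lin a b x)).const_mul c

private lemma aux_cos (c a b x : ℝ) :
    HasDerivAt (fun t : ℝ => c * Real.cos ((a * t + b) / 2))
      (c * (-Real.sin ((a * x + b) / 2) * (a / 2))) x :=
  ((Real.hasDerivAt_cos _).comp x (aux_lin a b x)).const_mul c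

/-- Along the Projective Euler pullback, if the momenta
(P, Φ, Θ, Ψ) are defined by Σpᵢ dqᵢ = P dρ + Φ dφ + Θ dθ + Ψ dψ, then
Φ = (1/2)(p₁q₄ - p₄q₁ - p₂q₃ + p₃q₂) = Ξ₁/2 and
Ψ = (1/2)(p₁q₄ - p₄q₁ + p₂q₃ - p₃q₂) = Ξ₀/2. -/
theorem projective_euler_momenta (ρ φ θ ψ P Φ Θ Ψ p1 p2 p3 p4 : ℝ)
    (hρ : 0 < ρ)
    (hP : p1 * deriv (fun t => q1f t φ θ ψ) ρ + p2 * deriv (fun t => q2f t φ θ ψ) ρ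
        + p3 * deriv (fun t => q3f t φ θ ψ) ρ + p4 * deriv (fun t => q4f t φ θ ψ) ρ = P)
    (hΦ : p1 * deriv (fun t => q1f ρ t θ ψ) φ + p2 * deriv (fun t => q2f ρ t θ ψ) φ
        + p3 * deriv (fun t => q3f ρ t θ ψ) φ + p4 * deriv (fun t => q4f ρ t θ ψ) φ = Φ)
    (hΘ : p1 * deriv (fun t => q1f ρ φ t ψ) θ + p2 * deriv (fun t => q2f ρ φ t ψ) θ
        + p3 * deriv (fun t => q3f ρ φ t ψ) θ + p4 * deriv (fun t => q4f ρ φ t ψ) θ = Θ)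
    (hΨ : p1 * deriv (fun t => q1f ρ φ θ t) ψ + p2 * deriv (fun t => q2f ρ φ θ t) ψ
        + p3 * deriv (fun t => q3f ρ φ θ t) ψ + p4 * deriv (fun t => q4f ρ φ θ t) ψ = Ψ) :
    Φ = (1 / 2) * (p1 * q4f ρ φ θ ψ - p4 * q1f ρ φ θ ψ
          - p2 * q3f ρ φ θ ψ + p3 * q2f ρ φ θ ψ) ∧
    Ψ = (1 / 2) * (p1 * q4f ρ φ θ ψ - p4 * q1f ρ φ θ ψ
          + p2 * q3f ρ φ θ ψ - p3 * q2f ρ φ θ ψ) := by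
  set c1 := Real.sqrt ρ * Real.cos (θ / 2) with hc1
  set c2 := Real.sqrt ρ * Real.sin (θ / 2) with hc2
  -- φ-derivatives
  have d1φ : deriv (fun t => q1f ρ t θ ψ) φ = c1 * (Real.cos ((φ + ψ) / 2) * (1 / 2)) := by
    have := (aux_sin c1 1 ψ φ).deriv
    simpa [q1f, hc1] using this
  have d2φ : deriv (fun t => q2f ρ t θ ψ) φ = c2 * (-Real.sin ((φ - ψ) / 2) * (1 / 2)) := by
    have := (aux_cos c2 1 (-ψ) φ).deriv
    simpa [q2f, hc2, sub_eq_add_neg] using this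
  have d3φ : deriv (fun t => q3f ρ t θ ψ) φ = c2 * (Real.cos ((φ - ψ) / 2) * (1 / 2)) := by
    have := (aux_sin c2 1 (-ψ) φ).deriv
    simpa [q3f, hc2, sub_eq_add_neg] using this
  have d4φ : deriv (fun t => q4f ρ t θ ψ) φ = c1 * (-Real.sin ((φ + ψ) / 2) * (1 / 2)) := by
    have := (aux_cos c1 1 ψ φ).deriv
    simpa [q4f, hc1] using this
  -- ψ-derivatives
  have d1ψ : deriv (fun t => q1f ρ φ θ t) ψ = c1 * (Real.cos ((φ + ψ) / 2) * (1 / 2)) := by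
    have := (aux_sin c1 1 φ ψ).deriv
    simpa [q1f, hc1, add_comm] using this
  have d2ψ : deriv (fun t => q2f ρ φ θ t) ψ = c2 * (-Real.sin ((φ - ψ) / 2) * (-1 / 2)) := by
    have e2 : (fun t => q2f ρ φ θ t) = fun t : ℝ => c2 * Real.cos (((-1) * t + φ) / 2) := by
      funext t; simp only [q2f, hc2]; congr 1; ring
    have e : (-1 : ℝ) * ψ + φ = φ - ψ := by ring
    rw [e2, (aux_cos c2 (-1) φ ψ).deriv, e]
  have d3ψ : deriv (fun t => q3f ρ φ θ t) ψ = c2 * (Real.cos ((φ - ψ) / 2) * (-1 / 2)) := by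
    have e2 : (fun t => q3f ρ φ θ t) = fun t : ℝ => c2 * Real.sin (((-1) * t + φ) / 2) := by
      funext t; simp only [q3f, hc2]; congr 1; ring
    have e : (-1 : ℝ) * ψ + φ = φ - ψ := by ring
    rw [e2, (aux_sin c2 (-1) φ ψ).deriv, e]
  have d4ψ : deriv (fun t => q4f ρ φ θ t) ψ = c1 * (-Real.sin ((φ + ψ) / 2) * (1 / 2)) := by
    have := (aux_cos c1 1 φ ψ).deriv
    simpa [q4f, hc1, add_comm] using this
  rw [d1φ, d2φ, d3φ, d4φ] at hΦ
  rw [d1ψ, d2ψ, d3ψ, d4ψ] at hΨ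
  constructor
  · rw [← hΦ]; simp only [q1f, q2f, q3f, q4f, hc1, hc2]; ring
  · rw [← hΨ]; simp only [q1f, q2f, q3f, q4f, hc1, hc2]; ring
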